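/- Let q = N be a nonnegative integer, and let π : Λ → ℤ[x_1, ..., x_N] be the evaluation homomorphism setting x_{N+1} = x_{N+2} = ... = 0. Then ∇ ∘ π = π ∘ ∇_N, where ∇ = ∂/∂x_1 + ... + ∂/∂x_N and ∇_N is the unique derivation of Λ with ∇_N(h_n) = (n + N - 1)h_{n-1} for all n > 0. -/
import Mathlib


open MvPolynomial

/-- The complete homogeneous symmetric polynomial `h_n` in `N` variables,
with `h_n = 0` for `n < 0`. -/
noncomputable def hh (N : ℕ) (n : ℤ) : MvPolynomial (Fin N) ℤ :=
  if 0 ≤ n then ∑ d ∈ Finset.Nat.antidiagonalTuple N n.toNat, ∏ i, X i ^ d i else 0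

/-- The diagonal derivative `∇ = ∂/∂x_1 + ⋯ + ∂/∂x_N`. -/
noncomputable def nabla (N : ℕ) (f : MvPolynomial (Fin N) ℤ) : MvPolynomial (Fin N) ℤ :=
  ∑ i, pderiv i f

/-- `a ∈ P_N`: weakly decreasing tuples of nonnegative integers. -/
def IsPar {N : ℕ} (a : Fin N → ℤ) : Prop :=
  (∀ i j : Fin N, i ≤ j → a j ≤ a i) ∧ ∀ i, 0 ≤ a i

/-- The skew Schur polynomial, defined by the Jacobi–Trudi formula. -/
noncomputable def skewSchur (N : ℕ) (lam mu : Fin N → ℤ) : MvPolynomial (Fin N) ℤ :=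
  Matrix.det (Matrix.of fun i j : Fin N => hh N (lam i - mu j - (i : ℤ) + (j : ℤ)))

/-- The tuple `e_k` with `1` in position `k` and `0` elsewhere. -/
def ee {N : ℕ} (k : Fin N) : Fin N → ℤ := fun i => if i = k then 1 else 0

lemma prod_eq_mono (N : ℕ) (d : Fin N → ℕ) :
    (∏ i, (X i : MvPolynomial (Fin N) ℤ) ^ d i) =
      monomial (Finsupp.equivFunOnFinite.symm d) 1 := by
  rw [monomial_eq, Finsupp.prod_fintype _ _ (fun i => pow_zero _)]
  simp


lemma hh_nat (N n : ℕ) : hh N (n : ℤ) =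
    ∑ d ∈ Finset.Nat.antidiagonalTuple N n, monomial (Finsupp.equivFunOnFinite.symm d) 1 := by
  simp [hh, prod_eq_mono]

lemma nabla_hh (N n : ℕ) :
    nabla N (hh N ((n : ℤ) + 1)) = C ((n : ℤ) + (N : ℤ)) * hh N (n : ℤ) := by
  have h1 : ((n : ℤ) + 1) = ((n + 1 : ℕ) : ℤ) := by push_cast; ring
  rw [h1, hh_nat, hh_nat, nabla, Finset.mul_sum]
  -- Move the sums around
  have lhs : ∑ i : Fin N, (pderiv i) (∑ d ∈ Finset.Nat.antidiagonalTuple N (n+1),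
        (monomial (Finsupp.equivFunOnFinite.symm d)) (1:ℤ)) =
      ∑ p ∈ Finset.Nat.antidiagonalTuple N (n+1) ×ˢ Finset.univ,
        monomial (Finsupp.equivFunOnFinite.symm p.1 - Finsupp.single p.2 1) ((p.1 p.2 : ℤ)) := by
    rw [Finset.sum_product]
    rw [Finset.sum_comm]
    refine Finset.sum_congr rfl fun i _ => ?_
    rw [map_sum]
    refine Finset.sum_congr rfl fun d _ => ?_
    rw [pderiv_monomial]
    simp
  rw [lhs]
  have rhs : ∑ d ∈ Finset.Nat.antidiagonalTuple N n,
        C ((n : ℤ) + N) * (monomial (Finsupp.equivFunOnFinite.symm d)) (1:ℤ) =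
      ∑ p ∈ Finset.Nat.antidiagonalTuple N n ×ˢ Finset.univ,
        monomial (Finsupp.equivFunOnFinite.symm p.1) ((p.1 p.2 : ℤ) + 1) := by
    rw [Finset.sum_product]
    refine Finset.sum_congr rfl fun d hd => ?_
    rw [← map_sum (monomial (Finsupp.equivFunOnFinite.symm d)), C_mul_monomial, mul_one]
    congr 1
    rw [Finset.sum_add_distrib]
    rw [Finset.Nat.mem_antidiagonalTuple] at hd
    push_cast [← hd]
    simp
  rw [rhs]
  refine Finset.sum_bij_ne_zero
    (fun p _ _ => (Function.update p.1 p.2 (p.1 p.2 - 1), p.2)) ?_ ?_ ?_ ?_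
  · rintro ⟨d, i⟩ hmem hne
    simp only [Finset.mem_product, Finset.Nat.mem_antidiagonalTuple] at hmem ⊢
    refine ⟨?_, Finset.mem_univ _⟩
    have hdi : d i ≠ 0 := by
      intro h; apply hne; simp [h]
    rw [Finset.sum_update_of_mem (Finset.mem_univ i)]
    rw [← Finset.add_sum_erase _ d (Finset.mem_univ i)] at hmem
    simp only [Finset.sdiff_singleton_eq_erase] at *
    omega
  · rintro ⟨d₁, i₁⟩ h₁₁ h₁₂ ⟨d₂, i₂⟩ h₂₁ h₂₂ heq
    have hdi₁ : d₁ i₁ ≠ 0 := by intro h; apply h₁₂; simp [h]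
    have hdi₂ : d₂ i₂ ≠ 0 := by intro h; apply h₂₂; simp [h]
    have hi : i₁ = i₂ := congrArg Prod.snd heq
    subst hi
    have hfun := congrArg Prod.fst heq
    simp only at hfun
    refine Prod.ext ?_ rfl
    funext k
    have hk' := congrFun hfun k
    by_cases hk : k = i₁
    · subst hk
      simp only [Function.update_self] at hk'
      show d₁ k = d₂ k
      omega
    · simpa [Function.update_of_ne hk] using hk'
  · rintro ⟨d, i⟩ hmem hne
    simp only [Finset.mem_product, Finset.Nat.mem_antidiagonalTuple] at hmem
    refine ⟨(Function.update d i (d i + 1), i), ?_, ?_, ?_⟩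
    · simp only [Finset.mem_product, Finset.Nat.mem_antidiagonalTuple, Finset.mem_univ, and_true]
      rw [Finset.sum_update_of_mem (Finset.mem_univ i)]
      rw [← Finset.add_sum_erase _ d (Finset.mem_univ i)] at hmem
      simp only [Finset.sdiff_singleton_eq_erase] at *
      omega
    · simp only [Function.update_self, Ne, monomial_eq_zero]
      push_cast
      omega
    · simp only [Function.update_self]
      refine Prod.ext ?_ rfl
      funext j
      by_cases hj : j = i
      · subst hj; simp
      · simp [Function.update_of_ne hj]
  · rintro ⟨d, i⟩ hmem hne
    have hdi : d i ≠ 0 := by intro h; apply hne; simp [h]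
    simp only
    have key : Finsupp.equivFunOnFinite.symm (Function.update d i (d i - 1)) =
        Finsupp.equivFunOnFinite.symm d - Finsupp.single i 1 := by
      ext j
      by_cases hj : j = i
      · subst hj; simp [Finsupp.tsub_apply]
      · simp [Function.update_of_ne hj, Finsupp.tsub_apply, Finsupp.single_apply, Ne.symm hj]
    rw [key]
    simp only [Function.update_self]
    congr 1
    omega

lemma hh_zero (N : ℕ) : hh N 0 = 1 := by
  simp [hh, Finset.Nat.antidiagonalTuple_zero_right]

lemma nabla_add (N : ℕ) (p q : MvPolynomial (Fin N) ℤ) :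
    nabla N (p + q) = nabla N p + nabla N q := by
  simp [nabla, Finset.sum_add_distrib]

lemma nabla_C (N : ℕ) (a : ℤ) : nabla N (C a) = 0 := by
  simp [nabla]

lemma nabla_mul (N : ℕ) (p q : MvPolynomial (Fin N) ℤ) :
    nabla N (p * q) = nabla N p * q + p * nabla N q := by
  simp [nabla, Finset.sum_add_distrib, Finset.sum_mul, Finset.mul_sum, mul_comm]
  exact add_comm _ _


/-- We model the ring `Λ` of symmetric functions over `ℤ` as the polynomial ring
`ℤ[h_1, h_2, h_3, ...]` (it is freely generated by the `h_i`); the variable `X n`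
corresponds to `h_{n+1}`, and the evaluation `π` sends `h_{n+1}` to the complete
homogeneous symmetric polynomial in `x_1, ..., x_N`. -/
theorem nabla_comp_eval (N : ℕ)
    (D : Derivation ℤ (MvPolynomial ℕ ℤ) (MvPolynomial ℕ ℤ))
    (hD : ∀ n : ℕ, D (X n) =
      C (((n : ℤ) + 1) + (N : ℤ) - 1) * (if n = 0 then 1 else X (n - 1)))
    (f : MvPolynomial ℕ ℤ) :
    nabla N (aeval (fun n : ℕ => hh N ((n : ℤ) + 1)) f) =
      aeval (fun n : ℕ => hh N ((n : ℤ) + 1)) (D f) := by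
  induction f using MvPolynomial.induction_on with
  | C a =>
    have : D (C a) = 0 := by
      rw [show (C a : MvPolynomial ℕ ℤ) = algebraMap ℤ _ a from rfl]
      exact D.map_algebraMap a
    rw [this, map_zero, aeval_C]
    simp [nabla]
  | add p q hp hq =>
    rw [map_add, nabla_add, hp, hq, map_add, map_add]
  | mul_X p n hp =>
    have key : nabla N (hh N ((n : ℤ) + 1)) =
        aeval (fun n : ℕ => hh N ((n : ℤ) + 1)) (D (X n)) := by
      rw [hD n, map_mul, aeval_C]
      rcases Nat.eq_zero_or_pos n with h0 | hpos
      · subst h0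
        rw [nabla_hh N 0]
        simp [hh_zero, algebraMap_eq]
      · rw [if_neg (Nat.pos_iff_ne_zero.mp hpos), aeval_X]
        have : ((n - 1 : ℕ) : ℤ) + 1 = (n : ℤ) := by omega
        rw [this, nabla_hh N n]
        congr 1
        · rw [algebraMap_eq]; ring_nf
    rw [map_mul, aeval_X, nabla_mul, hp, D.leibniz, map_add, smul_eq_mul, smul_eq_mul,
      map_mul, map_mul, aeval_X, key]
    ring
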